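/- (Scaled superlinear lower bound on the Legendre transform.) Assume Condition 1, and let K_DA, λ_DA be constants such that the quadratic expansion |H_c(x,α) − (1/2)‖α‖^2_{A(x)}| ≤ K_DA‖α‖^3 holds for ‖α‖ ≤ λ_DA uniformly in x, and let K_A = sup_x ‖A(x)‖. Set K̄ = λ_DA K_DA + K_A/2 and let L_c(x,β) = sup_α {⟨α,β⟩ − H_c(x,α)}. Then for any n, any G > 0 with √G/(a(n)√n) ≤ λ_DA, and all x, β ∈ R^d, d · a(n)^2 n · L_c(x,β) + d G K̄ ≥ √G · a(n)√n · ‖β‖. -/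

import Mathlib

open MeasureTheory ProbabilityTheory Filter Set
open scoped ENNReal RealInnerProductSpace BoundedContinuousFunction NNReal Topology

noncomputable section

abbrev EV (d : ℕ) := EuclideanSpace ℝ (Fin d)

def mvec {d : ℕ} (M : Matrix (Fin d) (Fin d) ℝ) (v : EV d) : EV d :=
  (EuclideanSpace.equiv (Fin d) ℝ).symm (M.mulVec (EuclideanSpace.equiv (Fin d) ℝ v))

structure Setup (d : ℕ) where
  μ : EV d → Measure (EV d)
  μ_prob : ∀ x, IsProbabilityMeasure (μ x)
  μ_meas : ∀ B : Set (EV d), MeasurableSet B → Measurable fun x => μ x B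
  μ_mean : ∀ x, (∫ y, y ∂(μ x)) = 0
  lam : ℝ
  Kmgf : ℝ
  lam_pos : 0 < lam
  mgf_bound : ∀ x α, ‖α‖ ≤ lam → Real.log (∫ y, Real.exp ⟪y, α⟫ ∂(μ x)) ≤ Kmgf
  μ_weakCont : ∀ f : EV d →ᵇ ℝ, Continuous fun x => ∫ y, f y ∂(μ x)
  b : EV d → EV d
  Kb : ℝ
  b_smooth : ContDiff ℝ 1 b
  b_bound : ∀ x, ‖b x‖ ≤ Kb
  Db_bound : ∀ x, ‖fderiv ℝ b x‖ ≤ Kb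
  x0 : EV d
  X0 : ℝ → EV d
  X0_cont : Continuous X0
  X0_eq : ∀ t ∈ Set.Icc (0:ℝ) 1, X0 t = x0 + ∫ s in (0:ℝ)..t, b (X0 s)

def covA {d : ℕ} (S : Setup d) (x : EV d) : Matrix (Fin d) (Fin d) ℝ :=
  Matrix.of fun i j => ∫ y, (y i) * (y j) ∂(S.μ x)

/-- The centered log moment generating function `H_c(x, α)`. -/
def Hc {d : ℕ} (S : Setup d) (x α : EV d) : ℝ :=
  Real.log (∫ y, Real.exp ⟪y, α⟫ ∂(S.μ x))

/-- The Legendre transform `L_c(x, β) = sup_α {⟨α, β⟩ − H_c(x, α)}` of `H_c(x, ·)`,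
as an extended nonnegative real (it is nonnegative since `H_c(x, 0) = 0`). -/
def Lc {d : ℕ} (S : Setup d) (x β : EV d) : ℝ≥0∞ :=
  ⨆ α : EV d, ENNReal.ofReal (⟪α, β⟫ - Hc S x α)

/-! Test the supremum defining `L_c(x, β)` at the vector `α` of length
`r = √G / (a(n)√n)` pointing along `β`. Since `r ≤ λ_DA`, the quadratic expansion gives
`H_c(x, α) ≤ K̄ r²`, hence `L_c(x, β) ≥ r‖β‖ - K̄ r²`; multiplying by `a(n)² n` is exactly
the claim with `d = 1`, and the factor `d ≥ 1` only weakens it. -/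

lemma le_add_mul_sq_of_abs_sub_le {h q k t l : ℝ} (ht : 0 ≤ t) (htl : t ≤ l)
    (habs : |h - q| ≤ k * t ^ 3) : h ≤ q + l * k * t ^ 2 := by
  have hcube : k * t ^ 3 ≤ l * k * t ^ 2 := by
    rcases ht.eq_or_lt with rfl | ht
    · simp
    have hk : 0 ≤ k := nonneg_of_mul_nonneg_left (abs_nonneg _ |>.trans habs) (by positivity)
    nlinarith [mul_nonneg hk (sq_nonneg t)]
  linarith [(abs_le.mp habs).2]

lemma Hc_le_mul_norm_sq {d : ℕ} (S : Setup d) {KDA lamDA KA : ℝ}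
    (hquad : ∀ x α, ‖α‖ ≤ lamDA →
      |Hc S x α - (1/2) * ⟪α, mvec (covA S x) α⟫| ≤ KDA * ‖α‖^3)
    (hKA : ∀ x β, ⟪β, mvec (covA S x) β⟫ ≤ KA * ‖β‖^2)
    {x α : EV d} (hα : ‖α‖ ≤ lamDA) :
    Hc S x α ≤ (lamDA * KDA + KA / 2) * ‖α‖ ^ 2 := by
  have h := le_add_mul_sq_of_abs_sub_le (norm_nonneg α) hα (hquad x α hα)
  linarith [hKA x α]

lemma ofReal_mul_norm_sub_le_iSup_inner_sub {E : Type*} [NormedAddCommGroup E]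
    [InnerProductSpace ℝ E] (H : E → ℝ) {β : E} (hβ : β ≠ 0) {r K : ℝ} (hr : 0 ≤ r)
    (hH : ∀ α : E, ‖α‖ = r → H α ≤ K * r ^ 2) :
    ENNReal.ofReal (r * ‖β‖ - K * r ^ 2) ≤ ⨆ α, ENNReal.ofReal (⟪α, β⟫ - H α) := by
  have hβ' : ‖β‖ ≠ 0 := norm_ne_zero_iff.mpr hβ
  set α : E := (r / ‖β‖) • β
  have hαnorm : ‖α‖ = r := by
    rw [norm_smul, Real.norm_of_nonneg (by positivity), div_mul_cancel₀ _ hβ']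
  have hαβ : ⟪α, β⟫ = r * ‖β‖ := by
    rw [real_inner_smul_left, real_inner_self_eq_norm_sq]
    field_simp
  refine le_trans ?_ (le_iSup (fun α => ENNReal.ofReal (⟪α, β⟫ - H α)) α)
  exact ENNReal.ofReal_le_ofReal (by linarith [hH α hαnorm])

lemma ofReal_sqrt_mul_le_of_rescaled {s G b K : ℝ} (hs : 0 < s) (hG : 0 ≤ G) {L : ℝ≥0∞}
    (hL : ENNReal.ofReal (√G / s * b - K * (√G / s) ^ 2) ≤ L) :
    ENNReal.ofReal (√G * s * b) ≤ ENNReal.ofReal (s ^ 2) * L + ENNReal.ofReal (G * K) := by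
  have hsplit : √G * s * b = s ^ 2 * (√G / s * b - K * (√G / s) ^ 2) + G * K := by
    field_simp
    linear_combination K * Real.sq_sqrt hG
  calc ENNReal.ofReal (√G * s * b)
      ≤ ENNReal.ofReal (s ^ 2 * (√G / s * b - K * (√G / s) ^ 2)) + ENNReal.ofReal (G * K) := by
        rw [hsplit]
        exact ENNReal.ofReal_add_le
    _ ≤ ENNReal.ofReal (s ^ 2) * L + ENNReal.ofReal (G * K) := by
        rw [ENNReal.ofReal_mul (by positivity)]
        gcongr

theorem scaled_superlinear_lower_bound_Lc_general {d : ℕ} (S : Setup d)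
    (KDA lamDA KA : ℝ)
    (hquad : ∀ x α, ‖α‖ ≤ lamDA →
      |Hc S x α - (1/2) * ⟪α, mvec (covA S x) α⟫| ≤ KDA * ‖α‖^3)
    (hKA : ∀ x β, ⟪β, mvec (covA S x) β⟫ ≤ KA * ‖β‖^2)
    (a : ℕ → ℝ) (ha_pos : ∀ n, 0 < a n)
    (n : ℕ) (G : ℝ) (hG : 0 < G)
    (hGsmall : Real.sqrt G / (a n * Real.sqrt n) ≤ lamDA) :
    ∀ x β : EV d,
      ENNReal.ofReal (Real.sqrt G * (a n * Real.sqrt n) * ‖β‖) ≤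
        (d : ℝ≥0∞) * ENNReal.ofReal (a n ^ 2 * n) * Lc S x β
          + ENNReal.ofReal ((d:ℝ) * G * (lamDA * KDA + KA / 2)) := by
  intro x β
  rcases eq_or_ne β 0 with rfl | hβ
  · simp
  rcases n.eq_zero_or_pos with rfl | hn
  · simp
  have hd : (1 : ℝ≥0∞) ≤ d := by
    rcases d.eq_zero_or_pos with rfl | hd
    · exact absurd (Subsingleton.elim β 0) hβ
    · exact_mod_cast hd
  set s := a n * √(n : ℝ)
  have hs : 0 < s := mul_pos (ha_pos n) (Real.sqrt_pos.mpr (by exact_mod_cast hn))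
  have hLc : ENNReal.ofReal (√G / s * ‖β‖ - (lamDA * KDA + KA / 2) * (√G / s) ^ 2)
      ≤ Lc S x β :=
    ofReal_mul_norm_sub_le_iSup_inner_sub (Hc S x) hβ (by positivity) fun α hα =>
      hα ▸ Hc_le_mul_norm_sq S hquad hKA (hα ▸ hGsmall)
  have hsq : a n ^ 2 * (n : ℝ) = s ^ 2 := by
    rw [mul_pow, Real.sq_sqrt (Nat.cast_nonneg n)]
  rw [hsq, mul_assoc (d : ℝ), ENNReal.ofReal_mul (Nat.cast_nonneg d), ENNReal.ofReal_natCast,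
    mul_assoc (d : ℝ≥0∞), ← mul_add]
  exact (ofReal_sqrt_mul_le_of_rescaled hs hG.le hLc).trans (le_mul_of_one_le_left' hd)

/-- **Scaled superlinear lower bound on the Legendre transform.** -/
theorem scaled_superlinear_lower_bound_Lc {d : ℕ} (S : Setup d)
    (KDA lamDA KA : ℝ) (hlam0 : 0 < lamDA) (hlam : lamDA ≤ S.lam)
    (hquad : ∀ x α, ‖α‖ ≤ lamDA →
      |Hc S x α - (1/2) * ⟪α, mvec (covA S x) α⟫| ≤ KDA * ‖α‖^3)
    (hKA : ∀ x β, ⟪β, mvec (covA S x) β⟫ ≤ KA * ‖β‖^2)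
    (a : ℕ → ℝ) (ha_pos : ∀ n, 0 < a n)
    (n : ℕ) (G : ℝ) (hG : 0 < G)
    (hGsmall : Real.sqrt G / (a n * Real.sqrt n) ≤ lamDA) :
    ∀ x β : EV d,
      ENNReal.ofReal (Real.sqrt G * (a n * Real.sqrt n) * ‖β‖) ≤
        (d : ℝ≥0∞) * ENNReal.ofReal (a n ^ 2 * n) * Lc S x β
          + ENNReal.ofReal ((d:ℝ) * G * (lamDA * KDA + KA / 2)) :=
  scaled_superlinear_lower_bound_Lc_general S KDA lamDA KA hquad hKA a ha_pos n G hG hGsmall
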